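/- arXiv:1911.03433 — 3 statements merged into one kernel-verified Lean document; each statement's English description precedes it below -/
import Mathlib

section
/- Under the profile hypotheses, for every d > 0 and every x ∈ ℝ² ∖ {d·e₁, −d·e₁} one has the exact identity Im(∂_{x₂}V(x)/V(x)) = 2d·(x₁² − d² − x₂²)/(r₁(x)²·r₋₁(x)²), and |Re(∂_{x₂}V(x)/V(x))| ≤ ρ′(r₁(x))/ρ(r₁(x)) + ρ′(r₋₁(x))/ρ(r₋₁(x)). Consequently there exists C > 0, depending only on C₀ and ρ(1), such that for every d > 0 and every x with r₁(x) ≥ 1 and r₋₁(x) ≥ 1: |i·∂_{x₂}V(x)/V(x) + 2d·(x₁² − d² − x₂²)/(r₁(x)²·r₋₁(x)²)| ≤ C·(1/r₁(x)³ + 1/r₋₁(x)³); in particular the leading-order term of i·∂_{x₂}V/V is real-valued with explicit dependence on d. -/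
noncomputable section

open Complex MeasureTheory Filter Topology Set

/-- The plane `ℝ²`, with coordinates `x.1`, `x.2`. -/
abbrev R2 : Type := ℝ × ℝ

/-- The Euclidean norm on `ℝ²`. -/
def rE (x : R2) : ℝ := Real.sqrt (x.1 ^ 2 + x.2 ^ 2)

/-- The first basis vector `e₁ = (1,0)`. -/
def e1 : R2 := (1, 0)

/-- Partial derivative `∂_{x₁}` of a complex-valued function on `ℝ²`. -/
def pd1 (f : R2 → ℂ) (x : R2) : ℂ := fderiv ℝ f x (1, 0)

/-- Partial derivative `∂_{x₂}` of a complex-valued function on `ℝ²`. -/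
def pd2 (f : R2 → ℂ) (x : R2) : ℂ := fderiv ℝ f x (0, 1)

/-- The Laplacian of a complex-valued function on `ℝ²`. -/
def lap (f : R2 → ℂ) (x : R2) : ℂ := pd1 (pd1 f) x + pd2 (pd2 f) x

/-- Partial derivative `∂_{x₁}` of a real-valued function on `ℝ²`. -/
def pd1R (f : R2 → ℝ) (x : R2) : ℝ := fderiv ℝ f x (1, 0)

/-- Partial derivative `∂_{x₂}` of a real-valued function on `ℝ²`. -/
def pd2R (f : R2 → ℝ) (x : R2) : ℝ := fderiv ℝ f x (0, 1)

/-- The Laplacian of a real-valued function on `ℝ²`. -/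
def lapR (f : R2 → ℝ) (x : R2) : ℝ := pd1R (pd1R f) x + pd2R (pd2R f) x

/-- Euclidean modulus `|∇f|` of the gradient of a complex-valued function. -/
def gradAbs (f : R2 → ℂ) (x : R2) : ℝ :=
  Real.sqrt (Complex.normSq (pd1 f x) + Complex.normSq (pd2 f x))

/-- Euclidean modulus `|∇²f|` of the Hessian of a complex-valued function. -/
def hessAbs (f : R2 → ℂ) (x : R2) : ℝ :=
  Real.sqrt (Complex.normSq (pd1 (pd1 f) x) + Complex.normSq (pd2 (pd1 f) x) +
    Complex.normSq (pd1 (pd2 f) x) + Complex.normSq (pd2 (pd2 f) x))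

/-- Euclidean modulus `|∇f|` of the gradient of a real-valued function. -/
def gradAbsR (f : R2 → ℝ) (x : R2) : ℝ :=
  Real.sqrt (pd1R f x ^ 2 + pd2R f x ^ 2)

/-- Euclidean modulus `|∇²f|` of the Hessian of a real-valued function. -/
def hessAbsR (f : R2 → ℝ) (x : R2) : ℝ :=
  Real.sqrt (pd1R (pd1R f) x ^ 2 + pd2R (pd1R f) x ^ 2 +
    pd1R (pd2R f) x ^ 2 + pd2R (pd2R f) x ^ 2)

/-- `r₁(x) = |x − d·e₁|`. -/
def r1 (d : ℝ) (x : R2) : ℝ := rE (x - d • e1)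

/-- `r₋₁(x) = |x + d·e₁|`. -/
def rm1 (d : ℝ) (x : R2) : ℝ := rE (x + d • e1)

/-- `r̃(x) = min (r₁(x), r₋₁(x))`. -/
def rt (d : ℝ) (x : R2) : ℝ := min (r1 d x) (rm1 d x)

/-- The profile hypotheses: `ρ` is continuous on `[0,∞)`, `C²` on `(0,∞)`, with
`ρ(0) = 0`, `0 < ρ < 1` on `(0,∞)`, and the decay bounds `1 − ρ² ≤ C₀/(1+r)²`,
`0 < ρ′ ≤ C₀/(1+r)³`, `|ρ″| ≤ C₀/(1+r)³`; `V₁` is the associated degree-one vortex,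
assumed to be `C²` on `ℝ²`. -/
structure VortexProfile where
  ρ : ℝ → ℝ
  C₀ : ℝ
  C₀_pos : 0 < C₀
  rho_continuous : ContinuousOn ρ (Set.Ici 0)
  rho_smooth : ContDiffOn ℝ 2 ρ (Set.Ioi 0)
  rho_zero : ρ 0 = 0
  rho_pos : ∀ r : ℝ, 0 < r → 0 < ρ r
  rho_lt_one : ∀ r : ℝ, 0 < r → ρ r < 1
  mod_bound : ∀ r : ℝ, 0 < r → 1 - ρ r ^ 2 ≤ C₀ / (1 + r) ^ 2
  deriv_pos : ∀ r : ℝ, 0 < r → 0 < deriv ρ r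
  deriv_bound : ∀ r : ℝ, 0 < r → deriv ρ r ≤ C₀ / (1 + r) ^ 3
  deriv2_bound : ∀ r : ℝ, 0 < r → |deriv (deriv ρ) r| ≤ C₀ / (1 + r) ^ 3
  V₁ : R2 → ℂ
  V₁_zero : V₁ 0 = 0
  V₁_polar : ∀ x : R2, x ≠ 0 →
    V₁ x = (ρ (rE x) : ℂ) * ((x.1 : ℂ) + (x.2 : ℂ) * Complex.I) / (rE x : ℂ)
  V₁_smooth : ContDiff ℝ 2 V₁

/-- The antivortex `V₋₁ = conj V₁`. -/
def VmOne (P : VortexProfile) : R2 → ℂ := fun y => (starRingEnd ℂ) (P.V₁ y)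

/-- `V(x) = V₁(x − d·e₁)·V₋₁(x + d·e₁)`. -/
def VP (P : VortexProfile) (d : ℝ) (x : R2) : ℂ :=
  P.V₁ (x - d • e1) * VmOne P (x + d • e1)

/-! In polar form `∂₂V₁/V₁ = ρ′(r) y₂/(r ρ(r)) + i y₁/r²`, and since
`V = V₁(· - d e₁) · conj V₁(· + d e₁)`, `∂₂V/V` is the first log-derivative plus the conjugate of
the second. The imaginary parts combine to the explicit rational term, the real parts are bounded by
`ρ′/ρ` because `|y₂| ≤ r`, and for `r ≥ 1` monotonicity of `ρ` gives `ρ′/ρ ≤ C₀/(ρ(1) r³)`. -/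

lemma rE_sq (y : R2) : rE y ^ 2 = y.1 ^ 2 + y.2 ^ 2 :=
  Real.sq_sqrt (by positivity)

lemma rE_pos {y : R2} (hy : y ≠ 0) : 0 < rE y := by
  refine Real.sqrt_pos.mpr ?_
  rcases y with ⟨a, b⟩
  by_cases ha : a = 0
  · have hb : b ≠ 0 := fun hb => hy (by simp [ha, hb])
    simp only [ha]
    positivity
  · positivity

lemma ne_zero_of_one_le_rE {y : R2} (h : 1 ≤ rE y) : y ≠ 0 := by
  rintro rfl
  norm_num [rE] at h

lemma abs_snd_le_rE (y : R2) : |y.2| ≤ rE y := by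
  rw [← Real.sqrt_sq_eq_abs]
  exact Real.sqrt_le_sqrt (by nlinarith [sq_nonneg y.1])

lemma sub_smul_e1 (d : ℝ) (x : R2) : x - d • e1 = (x.1 - d, x.2) := by
  simp [e1, Prod.ext_iff]

lemma add_smul_e1 (d : ℝ) (x : R2) : x + d • e1 = (x.1 + d, x.2) := by
  simp [e1, Prod.ext_iff]

lemma r1_sq (d : ℝ) (x : R2) : r1 d x ^ 2 = (x.1 - d) ^ 2 + x.2 ^ 2 := by
  rw [r1, sub_smul_e1, rE_sq]

lemma rm1_sq (d : ℝ) (x : R2) : rm1 d x ^ 2 = (x.1 + d) ^ 2 + x.2 ^ 2 := by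
  rw [rm1, add_smul_e1, rE_sq]

lemma hasDerivAt_pd2 {f : R2 → ℂ} {y : R2} (hf : DifferentiableAt ℝ f y) :
    HasDerivAt (fun t : ℝ => f (y.1, t)) (pd2 f y) y.2 := by
  have hf' : DifferentiableAt ℝ f (y.1, y.2) := hf
  exact hf'.hasFDerivAt.comp_hasDerivAt y.2
    ((hasDerivAt_const y.2 y.1).prodMk (hasDerivAt_id y.2))

lemma pd2_eq_of_hasDerivAt {f : R2 → ℂ} {y : R2} {v : ℂ} (hf : DifferentiableAt ℝ f y)
    (h : HasDerivAt (fun t : ℝ => f (y.1, t)) v y.2) : pd2 f y = v :=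
  (hasDerivAt_pd2 hf).unique h

lemma hasDerivAt_rE_snd {y : R2} (hy : y ≠ 0) :
    HasDerivAt (fun t : ℝ => rE (y.1, t)) (y.2 / rE y) y.2 := by
  have hr := rE_pos hy
  have hsq : HasDerivAt (fun t : ℝ => y.1 ^ 2 + t ^ 2) (2 * y.2) y.2 := by
    simpa using (hasDerivAt_pow 2 y.2).const_add (y.1 ^ 2)
  refine (hsq.sqrt (rE_sq y ▸ (pow_pos hr 2).ne')).congr_deriv ?_
  change 2 * y.2 / (2 * rE y) = y.2 / rE y
  field_simp

namespace VortexProfile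

variable (P : VortexProfile)

lemma hasDerivAt_rho {r : ℝ} (hr : 0 < r) : HasDerivAt P.ρ (deriv P.ρ r) r :=
  ((P.rho_smooth.differentiableOn (by norm_num)).differentiableAt
    (Ioi_mem_nhds hr)).hasDerivAt

lemma V₁_ne_zero {y : R2} (hy : y ≠ 0) : P.V₁ y ≠ 0 := by
  have hr := rE_pos hy
  have hz : (y.1 : ℂ) + (y.2 : ℂ) * I ≠ 0 := fun h =>
    hy (Prod.ext (by simpa using congrArg re h) (by simpa using congrArg im h))
  rw [P.V₁_polar y hy]
  exact div_ne_zero (mul_ne_zero (ofReal_ne_zero.mpr (P.rho_pos _ hr).ne') hz)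
    (ofReal_ne_zero.mpr hr.ne')

/-- `∂₂V₁ / V₁` away from the origin. -/
def logDerivSnd (y : R2) : ℂ := ⟨deriv P.ρ (rE y) * y.2 / (rE y * P.ρ (rE y)), y.1 / rE y ^ 2⟩

lemma differentiable_V₁ : Differentiable ℝ P.V₁ :=
  P.V₁_smooth.differentiable (by norm_num)

/-- With `V₁ = ρ(r) z / r`, `z = y₁ + i y₂`: the real part is `ρ′ ∂₂r / ρ` and the imaginary part
comes from `∂₂ log (z / r) = i / z - y₂ / r² = i y₁ / r²`. -/
lemma pd2_V₁ {y : R2} (hy : y ≠ 0) : pd2 P.V₁ y = P.V₁ y * P.logDerivSnd y := by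
  have hr := rE_pos hy
  have hρ := P.rho_pos _ hr
  have hpolar : HasDerivAt
      (fun t : ℝ => (P.ρ (rE (y.1, t)) : ℂ) * ((y.1 : ℂ) + (t : ℂ) * I) / (rE (y.1, t) : ℂ))
      (((↑(deriv P.ρ (rE y) * (y.2 / rE y)) * ((y.1 : ℂ) + (y.2 : ℂ) * I)
          + ↑(P.ρ (rE y)) * I) * (rE y : ℂ)
        - ↑(P.ρ (rE y)) * ((y.1 : ℂ) + (y.2 : ℂ) * I) * ↑(y.2 / rE y)) / (rE y : ℂ) ^ 2) y.2 := by
    have hline : HasDerivAt (fun t : ℝ => (y.1 : ℂ) + (t : ℂ) * I) I y.2 := by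
      simpa using ((hasDerivAt_id y.2).ofReal_comp.mul_const I).const_add (y.1 : ℂ)
    exact ((((P.hasDerivAt_rho hr).comp y.2 (hasDerivAt_rE_snd hy)).ofReal_comp.mul hline).div
      (hasDerivAt_rE_snd hy).ofReal_comp (ofReal_ne_zero.mpr hr.ne'))
  have hV₁ : (fun t : ℝ => P.V₁ (y.1, t)) =ᶠ[𝓝 y.2]
      fun t => (P.ρ (rE (y.1, t)) : ℂ) * ((y.1 : ℂ) + (t : ℂ) * I) / (rE (y.1, t) : ℂ) := by
    filter_upwards [(continuous_const.prodMk continuous_id).continuousAt.eventually_ne hy]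
      with t ht using P.V₁_polar _ ht
  rw [pd2_eq_of_hasDerivAt (P.differentiable_V₁ y)
    (hpolar.congr_of_eventuallyEq hV₁), P.V₁_polar y hy]
  have hsq : ((rE y : ℝ) : ℂ) ^ 2 = (y.1 : ℂ) ^ 2 + (y.2 : ℂ) ^ 2 := by
    exact_mod_cast rE_sq y
  have hrc : (rE y : ℂ) ≠ 0 := ofReal_ne_zero.mpr hr.ne'
  have hρc : (P.ρ (rE y) : ℂ) ≠ 0 := ofReal_ne_zero.mpr hρ.ne'
  rw [logDerivSnd, Complex.mk_eq_add_mul_I]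
  push_cast
  field_simp
  linear_combination (I * (P.ρ (rE y) : ℂ)) * hsq - ((y.1 : ℂ) * y.2 * P.ρ (rE y)) * I_sq

lemma VP_vertical (d : ℝ) (x : R2) :
    (fun t : ℝ => VP P d (x.1, t))
      = fun t => P.V₁ (x.1 - d, t) * star (P.V₁ (x.1 + d, t)) := by
  funext t
  simp [VP, VmOne, e1]

lemma pd2_VP (d : ℝ) (x : R2) :
    pd2 (VP P d) x = pd2 P.V₁ (x - d • e1) * star (P.V₁ (x + d • e1))
      + P.V₁ (x - d • e1) * star (pd2 P.V₁ (x + d • e1)) := by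
  have hV₁ := P.differentiable_V₁
  have hVP : DifferentiableAt ℝ (VP P d) x := by
    unfold VP VmOne
    fun_prop
  refine pd2_eq_of_hasDerivAt hVP ?_
  rw [P.VP_vertical, sub_smul_e1, add_smul_e1]
  exact (hasDerivAt_pd2 (hV₁ (x.1 - d, x.2))).mul (hasDerivAt_pd2 (hV₁ (x.1 + d, x.2))).star

lemma pd2_VP_div_VP {d : ℝ} {x : R2} (h₁ : x - d • e1 ≠ 0) (hm₁ : x + d • e1 ≠ 0) :
    pd2 (VP P d) x / VP P d x
      = P.logDerivSnd (x - d • e1) + star (P.logDerivSnd (x + d • e1)) := by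
  have hVP : VP P d x ≠ 0 :=
    mul_ne_zero (P.V₁_ne_zero h₁) ((map_ne_zero _).mpr (P.V₁_ne_zero hm₁))
  rw [div_eq_iff hVP, pd2_VP, P.pd2_V₁ h₁, P.pd2_V₁ hm₁, star_mul, VP, VmOne]
  simp only [starRingEnd_apply]
  ring

lemma im_pd2_VP_div_VP {d : ℝ} {x : R2} (h₁ : x - d • e1 ≠ 0) (hm₁ : x + d • e1 ≠ 0) :
    (pd2 (VP P d) x / VP P d x).im
      = 2 * d * (x.1 ^ 2 - d ^ 2 - x.2 ^ 2) / (r1 d x ^ 2 * rm1 d x ^ 2) := by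
  have hr₁ : r1 d x ^ 2 ≠ 0 := (pow_pos (rE_pos h₁) 2).ne'
  have hrm₁ : rm1 d x ^ 2 ≠ 0 := (pow_pos (rE_pos hm₁) 2).ne'
  rw [P.pd2_VP_div_VP h₁ hm₁]
  change (x - d • e1).1 / r1 d x ^ 2 - (x + d • e1).1 / rm1 d x ^ 2 = _
  rw [div_sub_div _ _ hr₁ hrm₁, r1_sq, rm1_sq, sub_smul_e1, add_smul_e1]
  congr 1
  ring

lemma abs_deriv_mul_div_le {r b : ℝ} (hr : 0 < r) (hb : |b| ≤ r) :
    |deriv P.ρ r * b / (r * P.ρ r)| ≤ deriv P.ρ r / P.ρ r := by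
  have hρ := P.rho_pos r hr
  rw [abs_div, abs_mul, abs_of_pos (P.deriv_pos r hr), abs_of_pos (mul_pos hr hρ),
    div_le_div_iff₀ (by positivity) hρ]
  calc deriv P.ρ r * |b| * P.ρ r ≤ deriv P.ρ r * r * P.ρ r := by
        gcongr
        exact (P.deriv_pos r hr).le
    _ = deriv P.ρ r * (r * P.ρ r) := by ring

lemma abs_re_pd2_VP_div_VP_le {d : ℝ} {x : R2} (h₁ : x - d • e1 ≠ 0) (hm₁ : x + d • e1 ≠ 0) :
    |(pd2 (VP P d) x / VP P d x).re|
      ≤ deriv P.ρ (r1 d x) / P.ρ (r1 d x) + deriv P.ρ (rm1 d x) / P.ρ (rm1 d x) := by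
  rw [P.pd2_VP_div_VP h₁ hm₁]
  exact (abs_add_le _ _).trans (add_le_add
    (P.abs_deriv_mul_div_le (rE_pos h₁) (abs_snd_le_rE _))
    (P.abs_deriv_mul_div_le (rE_pos hm₁) (abs_snd_le_rE _)))

lemma norm_I_mul_pd2_VP_div_VP_add_le {d : ℝ} {x : R2} (h₁ : x - d • e1 ≠ 0)
    (hm₁ : x + d • e1 ≠ 0) :
    ‖I * pd2 (VP P d) x / VP P d x
        + ((2 * d * (x.1 ^ 2 - d ^ 2 - x.2 ^ 2) / (r1 d x ^ 2 * rm1 d x ^ 2) : ℝ) : ℂ)‖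
      ≤ deriv P.ρ (r1 d x) / P.ρ (r1 d x) + deriv P.ρ (rm1 d x) / P.ρ (rm1 d x) := by
  set w := pd2 (VP P d) x / VP P d x
  -- the explicit term is `-Im w`, so only `i Re w` survives
  have hw : I * pd2 (VP P d) x / VP P d x + (w.im : ℂ) = (w.re : ℂ) * I := by
    rw [mul_div_assoc]
    apply Complex.ext <;> simp [w]
  rw [← P.im_pd2_VP_div_VP h₁ hm₁, hw, norm_mul, norm_I, norm_real, Real.norm_eq_abs, mul_one]
  exact P.abs_re_pd2_VP_div_VP_le h₁ hm₁

lemma strictMonoOn_rho : StrictMonoOn P.ρ (Ici 0) :=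
  strictMonoOn_of_deriv_pos (convex_Ici 0) P.rho_continuous fun r hr =>
    P.deriv_pos r (by rwa [interior_Ici] at hr)

lemma deriv_div_rho_le {r : ℝ} (hr : 1 ≤ r) :
    deriv P.ρ r / P.ρ r ≤ P.C₀ / P.ρ 1 * (1 / r ^ 3) := by
  have hr₀ : 0 < r := one_pos.trans_le hr
  have hderiv : deriv P.ρ r ≤ P.C₀ / r ^ 3 :=
    (P.deriv_bound r hr₀).trans (by gcongr; exacts [P.C₀_pos.le, by linarith])
  have hρ : P.ρ 1 ≤ P.ρ r :=
    P.strictMonoOn_rho.monotoneOn (mem_Ici.mpr zero_le_one) (mem_Ici.mpr hr₀.le) hr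
  calc deriv P.ρ r / P.ρ r ≤ P.C₀ / r ^ 3 / P.ρ 1 :=
        div_le_div₀ (by have := P.C₀_pos; positivity) hderiv (P.rho_pos 1 one_pos) hρ
    _ = P.C₀ / P.ρ 1 * (1 / r ^ 3) := by ring

end VortexProfile

/-- Exact computation of `Im(∂₂V/V)`, a bound on `Re(∂₂V/V)`, and the
resulting estimate on `i·∂₂V/V + 2d(x₁²−d²−x₂²)/(r₁²r₋₁²)`. -/
theorem statement5 (P : VortexProfile) :
    (∀ d : ℝ, 0 < d → ∀ x : R2, x ≠ d • e1 → x ≠ -(d • e1) →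
      (pd2 (VP P d) x / VP P d x).im
          = 2 * d * (x.1 ^ 2 - d ^ 2 - x.2 ^ 2) / (r1 d x ^ 2 * rm1 d x ^ 2) ∧
      |(pd2 (VP P d) x / VP P d x).re|
          ≤ deriv P.ρ (r1 d x) / P.ρ (r1 d x) + deriv P.ρ (rm1 d x) / P.ρ (rm1 d x)) ∧
    ∃ C : ℝ, 0 < C ∧ ∀ d : ℝ, 0 < d → ∀ x : R2, 1 ≤ r1 d x → 1 ≤ rm1 d x →
      ‖Complex.I * pd2 (VP P d) x / VP P d x
          + Complex.ofReal (2 * d * (x.1 ^ 2 - d ^ 2 - x.2 ^ 2) / (r1 d x ^ 2 * rm1 d x ^ 2))‖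
        ≤ C * (1 / r1 d x ^ 3 + 1 / rm1 d x ^ 3) := by
  refine ⟨fun d _ x hx₁ hxm₁ => ?_, P.C₀ / P.ρ 1, div_pos P.C₀_pos (P.rho_pos 1 one_pos),
    fun d _ x hr₁ hrm₁ => ?_⟩
  · have h₁ : x - d • e1 ≠ 0 := sub_ne_zero.mpr hx₁
    have hm₁ : x + d • e1 ≠ 0 := fun h => hxm₁ (eq_neg_of_add_eq_zero_left h)
    exact ⟨P.im_pd2_VP_div_VP h₁ hm₁, P.abs_re_pd2_VP_div_VP_le h₁ hm₁⟩
  calc _ ≤ deriv P.ρ (r1 d x) / P.ρ (r1 d x) + deriv P.ρ (rm1 d x) / P.ρ (rm1 d x) :=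
        P.norm_I_mul_pd2_VP_div_VP_add_le (ne_zero_of_one_le_rE hr₁) (ne_zero_of_one_le_rE hrm₁)
    _ ≤ P.C₀ / P.ρ 1 * (1 / r1 d x ^ 3) + P.C₀ / P.ρ 1 * (1 / rm1 d x ^ 3) :=
        add_le_add (P.deriv_div_rho_le hr₁) (P.deriv_div_rho_le hrm₁)
    _ = P.C₀ / P.ρ 1 * (1 / r1 d x ^ 3 + 1 / rm1 d x ^ 3) := by ring
end
end

section
/- Let C_K > 0 and let G ∈ C⁰(ℝ² ∖ {0}, ℝ) satisfy |G(x)| ≤ C_K·|x|^{−3/2}·(1+|x|)^{−3/2} for all x ≠ 0 (the pointwise bound satisfied by the first derivatives of the Gross–Pitaevskii kernels K₀, K_j, L_{j,k}). Let 0 < α′ < α < 3 and let h ∈ C⁰(ℝ²,ℝ) with M := ‖(1+r̃)^{α}·h‖_{L^∞(ℝ²)} < +∞. Then for every d > 0 the convolution (G∗h)(x) = ∫_{ℝ²} G(x−y)·h(y) dy converges absolutely for every x, and there exists C(α,α′,C_K) > 0, independent of d and of h, such that |(G∗h)(x)| ≤ C(α,α′,C_K)·M/(1+r̃(x))^{α′}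 for all x ∈ ℝ². -/
noncomputable section

open Complex MeasureTheory Filter Topology Set

/-!
Write `k(r) = r^{-3/2}(1+r)^{-3/2}`, so that `|G| ≤ C_K k(|·|)` and `|h(y)| ≤ M q^{-α}` with
`q = 1 + r̃(y)`. Put `p = 1 + r̃(x)` and `r = |x - y|`; since `r̃` is 1-Lipschitz, `p ≤ q + r`, and
then `k(r) q^{-α} ≤ 8 p^{-α} (k(r) + q^{-3})`: if `q ≥ p/2` this is clear, and otherwise `r > p/2`,
so `k(r) ≤ r^{-3} ≤ 8 p^{-3}` while `q^{-α} ≤ p^{3-α} q^{-3}` because `α ≤ 3`. As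
`q^{-3} ≤ (1+r₁(y))^{-3} + (1+r₋₁(y))^{-3}` and both `k(|·|)` and `(1+|·|)^{-3}` are integrable on
`ℝ²`, integrating in `y` bounds the convolution by a multiple of `M p^{-α}` that does not depend
on `d`.
-/

section Integrability

open Module Metric

variable {E : Type*} [NormedAddCommGroup E] [NormedSpace ℝ E] [FiniteDimensional ℝ E]
  [MeasurableSpace E] [BorelSpace E] {μ : Measure E} [μ.IsAddHaarMeasure]

lemma integrable_of_norm_le_rpow_of_norm_le_one_add_norm_rpow (hd : 1 ≤ finrank ℝ E) {f : E → ℝ}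
    {C a b : ℝ} (ha : a < finrank ℝ E) (hb : finrank ℝ E < b) (hf : AEStronglyMeasurable f μ)
    (h_zero : ∀ x, ‖x‖ < 1 → ‖f x‖ ≤ C * ‖x‖ ^ (-a))
    (h_inf : ∀ x, 1 ≤ ‖x‖ → ‖f x‖ ≤ C * (1 + ‖x‖) ^ (-b)) :
    Integrable f μ := by
  rw [← integrableOn_univ, ← union_compl_self (ball (0 : E) 1)]
  refine .union (integrableOn_ball_of_norm_le_rpow (C := C) hd ha ?_ hf) ?_
  · exact ae_restrict_of_forall_mem measurableSet_ball fun x hx => h_zero x (mem_ball_zero_iff.1 hx)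
  · refine ((integrable_one_add_norm hb).const_mul C).integrableOn.mono' hf.restrict ?_
    refine ae_restrict_of_forall_mem measurableSet_ball.compl fun x hx => h_inf x ?_
    simpa using hx

end Integrability

lemma ContinuousOn.aestronglyMeasurable_of_compl_singleton {X Y : Type*} [TopologicalSpace X]
    [MeasurableSpace X] [OpensMeasurableSpace X] [MeasurableSingletonClass X]
    [TopologicalSpace Y] [TopologicalSpace.PseudoMetrizableSpace Y]
    [SecondCountableTopologyEither X Y] {μ : Measure X}
    [NullSingletonClass μ] {f : X → Y} {a : X} (hf : ContinuousOn f {a}ᶜ) :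
    AEStronglyMeasurable f μ := by
  simpa using hf.aestronglyMeasurable (μ := μ) (measurableSet_singleton a).compl

namespace DecayEstimate

lemma rE_eq_norm_toLp (x : R2) : rE x = ‖WithLp.toLp 2 x‖ := by
  simp [WithLp.prod_norm_eq_of_L2, rE]

lemma rE_add_le (x y : R2) : rE (x + y) ≤ rE x + rE y := by
  simpa only [rE_eq_norm_toLp, WithLp.toLp_add] using norm_add_le _ _

lemma norm_le_rE (x : R2) : ‖x‖ ≤ rE x := by
  refine max_le (Real.abs_le_sqrt ?_) (Real.abs_le_sqrt ?_) <;>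
    nlinarith [sq_nonneg x.1, sq_nonneg x.2]

lemma rE_nonneg (x : R2) : 0 ≤ rE x := Real.sqrt_nonneg _

@[fun_prop]
lemma continuous_rE : Continuous rE := by
  unfold rE; fun_prop

@[fun_prop]
lemma measurable_rE : Measurable rE := continuous_rE.measurable

lemma rt_nonneg (d : ℝ) (x : R2) : 0 ≤ rt d x :=
  le_min (rE_nonneg _) (rE_nonneg _)

lemma rt_le_rt_add_rE_sub (d : ℝ) (x y : R2) : rt d x ≤ rt d y + rE (x - y) := by
  have key : ∀ c : R2, rE (x + c) ≤ rE (y + c) + rE (x - y) := fun c => by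
    simpa only [show y + c + (x - y) = x + c by abel] using rE_add_le (y + c) (x - y)
  simp only [rt, r1, rm1, sub_eq_add_neg x, sub_eq_add_neg y, ← min_add_add_right]
  exact min_le_min (key _) (key _)

def kernelProfile (r : ℝ) : ℝ := (r ^ (3 / 2 : ℝ) * (1 + r) ^ (3 / 2 : ℝ))⁻¹

def decayProfile (r : ℝ) : ℝ := ((1 + r) ^ 3)⁻¹

lemma kernelProfile_nonneg {r : ℝ} (hr : 0 ≤ r) : 0 ≤ kernelProfile r := by
  unfold kernelProfile; positivity

lemma decayProfile_pos {r : ℝ} (hr : 0 ≤ r) : 0 < decayProfile r := by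
  unfold decayProfile; positivity

lemma kernelProfile_le_rpow_neg {r : ℝ} (hr : 0 ≤ r) : kernelProfile r ≤ r ^ (-(3 / 2) : ℝ) := by
  rw [kernelProfile, mul_inv, Real.rpow_neg hr]
  refine mul_le_of_le_one_right (by positivity) (inv_le_one_of_one_le₀ ?_)
  exact Real.one_le_rpow (by linarith) (by norm_num)

lemma kernelProfile_le_inv_pow_three {r : ℝ} (hr : 0 < r) : kernelProfile r ≤ (r ^ 3)⁻¹ := by
  have hsq : r ^ (3 / 2 : ℝ) * r ^ (3 / 2 : ℝ) = r ^ 3 := by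
    rw [← Real.rpow_add hr]; norm_num
  rw [kernelProfile, ← hsq]
  gcongr
  linarith

lemma kernelProfile_div_rpow_le {α p q r : ℝ} (hα0 : 0 ≤ α) (hα3 : α ≤ 3) (hp : 0 < p)
    (hq : 0 < q) (hr : 0 ≤ r) (hpqr : p ≤ q + r) :
    kernelProfile r / q ^ α ≤ 8 * (kernelProfile r + (q ^ 3)⁻¹) / p ^ α := by
  have hk := kernelProfile_nonneg hr
  have hpα : 0 < p ^ α := Real.rpow_pos_of_pos hp α
  rcases le_or_gt (p / 2) q with hq2 | hq2
  · have h2α : (2 : ℝ) ^ α ≤ 8 := by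
      calc (2 : ℝ) ^ α ≤ 2 ^ (3 : ℝ) := Real.rpow_le_rpow_of_exponent_le (by norm_num) hα3
        _ = 8 := by norm_num
    calc kernelProfile r / q ^ α ≤ kernelProfile r / (p / 2) ^ α := by gcongr
      _ = 2 ^ α * kernelProfile r / p ^ α := by
        rw [Real.div_rpow hp.le zero_le_two]; field_simp
      _ ≤ 8 * (kernelProfile r + (q ^ 3)⁻¹) / p ^ α := by
        gcongr; linarith [inv_pos.2 (pow_pos hq 3)]
  · have hr2 : p / 2 < r := by linarith
    have hkp : kernelProfile r ≤ 8 / p ^ 3 := by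
      calc kernelProfile r ≤ (r ^ 3)⁻¹ := kernelProfile_le_inv_pow_three (by linarith)
        _ ≤ ((p / 2) ^ 3)⁻¹ := by gcongr
        _ = 8 / p ^ 3 := by field_simp; norm_num
    calc kernelProfile r / q ^ α = kernelProfile r * q ^ (3 - α) / q ^ 3 := by
          rw [Real.rpow_sub hq]; norm_num; field_simp
      _ ≤ 8 / p ^ 3 * p ^ (3 - α) / q ^ 3 := by
          gcongr; linarith
      _ = 8 * (q ^ 3)⁻¹ / p ^ α := by
          rw [Real.rpow_sub hp]; norm_num; field_simp
      _ ≤ 8 * (kernelProfile r + (q ^ 3)⁻¹) / p ^ α := by gcongr; linarith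

lemma integrable_kernelProfile_rE : Integrable (fun z : R2 => kernelProfile (rE z)) := by
  refine integrable_of_norm_le_rpow_of_norm_le_one_add_norm_rpow (a := 3 / 2) (b := 3) (C := 8)
    (by simp) (by simp; norm_num) (by simp; norm_num) ?_ (fun z hz => ?_) (fun z hz => ?_)
  · unfold kernelProfile; fun_prop
  · rw [Real.norm_of_nonneg (kernelProfile_nonneg (rE_nonneg z))]
    rcases eq_or_ne z 0 with rfl | hz0
    · simp [kernelProfile, rE]
    calc kernelProfile (rE z) ≤ rE z ^ (-(3 / 2) : ℝ) := kernelProfile_le_rpow_neg (rE_nonneg z)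
      _ ≤ ‖z‖ ^ (-(3 / 2) : ℝ) :=
          Real.rpow_le_rpow_of_nonpos (norm_pos_iff.2 hz0) (norm_le_rE z) (by norm_num)
      _ ≤ 8 * ‖z‖ ^ (-(3 / 2) : ℝ) := le_mul_of_one_le_left (by positivity) (by norm_num)
  · have hzr := norm_le_rE z
    rw [Real.norm_of_nonneg (kernelProfile_nonneg (rE_nonneg z)), Real.rpow_neg (by positivity)]
    calc kernelProfile (rE z) ≤ (rE z ^ 3)⁻¹ := kernelProfile_le_inv_pow_three (by linarith)
      _ ≤ 8 * ((1 + ‖z‖) ^ (3 : ℝ))⁻¹ := by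
          rw [Real.rpow_ofNat, ← inv_inv (8 : ℝ), ← mul_inv]
          gcongr
          nlinarith [pow_le_pow_left₀ (by positivity) (show 1 + ‖z‖ ≤ 2 * rE z by linarith) 3]

lemma integrable_decayProfile_rE : Integrable (fun z : R2 => decayProfile (rE z)) := by
  refine (integrable_one_add_norm (E := R2) (μ := volume) (r := 3) (by simp; norm_num)).mono'
    (by unfold decayProfile; fun_prop) (.of_forall fun z => ?_)
  have := norm_le_rE z
  rw [Real.norm_of_nonneg (decayProfile_pos (rE_nonneg z)).le, Real.rpow_neg (by positivity),
    decayProfile]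
  norm_num
  gcongr

lemma integral_decayProfile_rE_pos : 0 < ∫ z : R2, decayProfile (rE z) := by
  refine (integral_pos_iff_support_of_nonneg (fun z => (decayProfile_pos (rE_nonneg z)).le)
    integrable_decayProfile_rE).2 ?_
  rw [Function.support_eq_univ fun z => (decayProfile_pos (rE_nonneg z)).ne']
  exact isOpen_univ.measure_pos volume univ_nonempty

lemma decayProfile_rt_le (d : ℝ) (y : R2) :
    decayProfile (rt d y) ≤ decayProfile (r1 d y) + decayProfile (rm1 d y) := by
  have h1 : 0 < decayProfile (r1 d y) := decayProfile_pos (rE_nonneg _)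
  have h2 : 0 < decayProfile (rm1 d y) := decayProfile_pos (rE_nonneg _)
  rcases min_cases (r1 d y) (rm1 d y) with ⟨h, -⟩ | ⟨h, -⟩ <;> rw [rt, h] <;> linarith

def majorant (d : ℝ) (x y : R2) : ℝ :=
  kernelProfile (rE (x - y)) + decayProfile (r1 d y) + decayProfile (rm1 d y)

lemma kernelProfile_div_weight_le {α : ℝ} (hα0 : 0 ≤ α) (hα3 : α ≤ 3) (d : ℝ) (x y : R2) :
    kernelProfile (rE (x - y)) / (1 + rt d y) ^ α ≤ 8 * majorant d x y / (1 + rt d x) ^ α := by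
  have hx := rt_nonneg d x
  have hy := rt_nonneg d y
  calc kernelProfile (rE (x - y)) / (1 + rt d y) ^ α
      ≤ 8 * (kernelProfile (rE (x - y)) + decayProfile (rt d y)) / (1 + rt d x) ^ α :=
        kernelProfile_div_rpow_le hα0 hα3 (by linarith) (by linarith) (rE_nonneg _)
          (by linarith [rt_le_rt_add_rE_sub d x y])
    _ ≤ _ := by
        rw [majorant, add_assoc]; gcongr; exact decayProfile_rt_le d y

lemma integrable_majorant (d : ℝ) (x : R2) : Integrable (majorant d x) :=
  ((integrable_kernelProfile_rE.comp_sub_left x).fun_add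
    (integrable_decayProfile_rE.comp_sub_right (d • e1))).fun_add
    (integrable_decayProfile_rE.comp_add_right (d • e1))

lemma integral_majorant (d : ℝ) (x : R2) :
    ∫ y, majorant d x y = (∫ z, kernelProfile (rE z)) + 2 * ∫ z, decayProfile (rE z) := by
  have hK := integrable_kernelProfile_rE.comp_sub_left x
  have hD₁ := integrable_decayProfile_rE.comp_sub_right (d • e1)
  have hD₂ := integrable_decayProfile_rE.comp_add_right (d • e1)
  simp only [majorant, r1, rm1]
  rw [integral_add (hK.fun_add hD₁) hD₂, integral_add hK hD₁,
    integral_sub_left_eq_self (fun z => kernelProfile (rE z)) volume x,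
    integral_sub_right_eq_self (fun z => decayProfile (rE z)) (d • e1),
    integral_add_right_eq_self (fun z => decayProfile (rE z)) (d • e1)]
  ring

theorem integrable_mul_and_abs_integral_le {α C_K M d : ℝ} (hα0 : 0 ≤ α) (hα3 : α ≤ 3)
    (hCK : 0 ≤ C_K) {G h : R2 → ℝ} (hGm : AEStronglyMeasurable G)
    (hG : ∀ z, z ≠ 0 → |G z| ≤ C_K * kernelProfile (rE z)) (hhm : AEStronglyMeasurable h)
    (hh : ∀ y, |h y| * (1 + rt d y) ^ α ≤ M) (x : R2) :
    Integrable (fun y => G (x - y) * h y) ∧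
      |∫ y, G (x - y) * h y| ≤
        8 * C_K * ((∫ z, kernelProfile (rE z)) + 2 * ∫ z, decayProfile (rE z)) * M /
          (1 + rt d x) ^ α := by
  have hweight : ∀ y, 0 < (1 + rt d y) ^ α := fun y =>
    Real.rpow_pos_of_pos (by linarith [rt_nonneg d y]) α
  have hM : 0 ≤ M := (mul_nonneg (abs_nonneg _) (hweight 0).le).trans (hh 0)
  set F : R2 → ℝ := fun y => 8 * C_K * M / (1 + rt d x) ^ α * majorant d x y
  have hF : Integrable F := (integrable_majorant d x).const_mul _
  have hbound : ∀ᵐ y, ‖G (x - y) * h y‖ ≤ F y := by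
    filter_upwards [Measure.ae_ne volume x] with y hy
    have hG' := hG (x - y) (sub_ne_zero.2 hy.symm)
    have hh' : |h y| ≤ M / (1 + rt d y) ^ α := (le_div_iff₀ (hweight y)).2 (hh y)
    calc ‖G (x - y) * h y‖ ≤ C_K * kernelProfile (rE (x - y)) * (M / (1 + rt d y) ^ α) := by
          rw [Real.norm_eq_abs, abs_mul]
          exact mul_le_mul hG' hh' (abs_nonneg _) ((abs_nonneg _).trans hG')
      _ = C_K * M * (kernelProfile (rE (x - y)) / (1 + rt d y) ^ α) := by ring
      _ ≤ C_K * M * (8 * majorant d x y / (1 + rt d x) ^ α) :=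
          mul_le_mul_of_nonneg_left (kernelProfile_div_weight_le hα0 hα3 d x y)
            (mul_nonneg hCK hM)
      _ = F y := by ring
  have hmeas : AEStronglyMeasurable (fun y => G (x - y) * h y) :=
    (hGm.comp_quasiMeasurePreserving
      (Measure.measurePreserving_sub_left volume x).quasiMeasurePreserving).mul hhm
  refine ⟨hF.mono' hmeas hbound, ?_⟩
  calc |∫ y, G (x - y) * h y| ≤ ∫ y, F y := norm_integral_le_of_norm_le hF hbound
    _ = _ := by
        rw [integral_const_mul, integral_majorant]; ring

end DecayEstimate

open DecayEstimate in
/-- Weighted decay estimates for convolution with the derivative of a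
Gross–Pitaevskii kernel, i.e. `G` with `|G(x)| ≤ C_K |x|^{−3/2}(1+|x|)^{−3/2}`. -/
theorem statement11 (α α' C_K : ℝ) (hα' : 0 < α') (hα'α : α' < α) (hα3 : α < 3)
    (hCK : 0 < C_K) :
    ∃ C : ℝ, 0 < C ∧
      ∀ G : R2 → ℝ, ContinuousOn G {x : R2 | x ≠ 0} →
        (∀ x : R2, x ≠ 0 →
          |G x| ≤ C_K / (rE x ^ ((3 : ℝ) / 2) * (1 + rE x) ^ ((3 : ℝ) / 2))) →
        ∀ d : ℝ, 0 < d →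
        ∀ h : R2 → ℝ, Continuous h →
        ∀ M : ℝ, (∀ x : R2, |h x| * (1 + rt d x) ^ α ≤ M) →
        ∀ x : R2,
          Integrable (fun y => G (x - y) * h y) volume ∧
          |∫ y : R2, G (x - y) * h y| ≤ C * M / (1 + rt d x) ^ α' := by
  have hK : 0 ≤ ∫ z, kernelProfile (rE z) :=
    integral_nonneg fun z => kernelProfile_nonneg (rE_nonneg z)
  have hC : 0 < 8 * C_K * ((∫ z, kernelProfile (rE z)) + 2 * ∫ z, decayProfile (rE z)) :=
    mul_pos (by linarith) (by linarith [integral_decayProfile_rE_pos])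
  refine ⟨_, hC, ?_⟩
  intro G hGc hGb d _ h hhc M hM x
  have hGK : ∀ z, z ≠ 0 → |G z| ≤ C_K * kernelProfile (rE z) := fun z hz =>
    (hGb z hz).trans_eq (div_eq_mul_inv _ _)
  obtain ⟨hint, hle⟩ := integrable_mul_and_abs_integral_le (hα'.trans hα'α).le hα3.le hCK.le
    hGc.aestronglyMeasurable_of_compl_singleton hGK hhc.aestronglyMeasurable hM x
  have hx : 1 ≤ 1 + rt d x := le_add_of_nonneg_right (rt_nonneg d x)
  have hM0 : 0 ≤ M := (mul_nonneg (abs_nonneg _) (Real.rpow_nonneg (by linarith) _)).trans (hM x)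
  exact ⟨hint, hle.trans (div_le_div_of_nonneg_left (mul_nonneg hC.le hM0) (by positivity)
    (Real.rpow_le_rpow_of_exponent_le hx hα'α.le))⟩
end
end

section
/- Let ρ : [0,∞) → ℝ be continuously differentiable with ρ(0) = 0, define V(x) := ρ(|x|)·(x₁ + i x₂)/|x| for x ≠ 0 and V(0) := 0, and assume V ∈ C¹(ℝ²,ℂ). Then for every x ≠ 0, with r = |x|, Re(i·∂_{x₂}V(x)·conj(∂_{x₁}V(x))) = −ρ(r)·ρ′(r)/r, and consequently for every R > 0: ∫_{B(0,R)} Re(i·∂_{x₂}V·conj(∂_{x₁}V)) dx = −π·ρ(R)². -/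
noncomputable section

open Complex MeasureTheory Filter Topology Set

/-!
Away from the origin `V = φ · (x₁ + i x₂)` with the real factor `φ = ρ(r)/r`, so by the product
rule `∂₁V = φ + (x₁ + i x₂) ∂₁φ` and `∂₂V = iφ + (x₁ + i x₂) ∂₂φ`. The terms quadratic in `∇φ`
contribute nothing to `Re(i ∂₂V conj ∂₁V)`, which is `-φ (φ + x·∇φ)`; for radial `φ` the Euler
derivative `x·∇φ` is `r (ρ/r)'`, and `φ + r (ρ/r)' = ρ'`. In polar coordinates the area element
`r dr dθ` cancels the `1/r`, leaving `-2π ∫₀^R ρ ρ' = -π (ρ(R)² - ρ(0)²)`.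
-/

lemma rE_sq_s18 (x : R2) : rE x ^ 2 = x.1 ^ 2 + x.2 ^ 2 := Real.sq_sqrt (by positivity)

lemma rE_pos_s18 {x : R2} (hx : x ≠ 0) : 0 < rE x := by
  refine Real.sqrt_pos.2 (lt_of_le_of_ne (by positivity) fun h => hx ?_)
  ext <;> simp <;> nlinarith [sq_nonneg x.1, sq_nonneg x.2]

lemma hasFDerivAt_rE {x : R2} (hx : x ≠ 0) :
    HasFDerivAt rE ((rE x)⁻¹ • (x.1 • ContinuousLinearMap.fst ℝ ℝ ℝ +
      x.2 • ContinuousLinearMap.snd ℝ ℝ ℝ)) x := by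
  have hq : HasFDerivAt (fun y : R2 => y.1 ^ 2 + y.2 ^ 2)
      ((2 * x.1) • ContinuousLinearMap.fst ℝ ℝ ℝ + (2 * x.2) • ContinuousLinearMap.snd ℝ ℝ ℝ) x := by
    refine (((hasFDerivAt_fst (p := x)).pow 2).add
      ((hasFDerivAt_snd (p := x)).pow 2)).congr_fderiv ?_
    ext <;> simp
  have hq0 : x.1 ^ 2 + x.2 ^ 2 ≠ 0 := by rw [← rE_sq_s18]; exact pow_ne_zero 2 (rE_pos_s18 hx).ne'
  refine (hq.sqrt hq0).congr_fderiv ?_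
  ext <;> simp [rE] <;> field_simp

lemma re_I_mul_pd2_mul_conj_pd1 {φ : R2 → ℝ} {φ' : R2 →L[ℝ] ℝ} {V : R2 → ℂ} {x : R2}
    (hφ : HasFDerivAt φ φ' x) (hV : V =ᶠ[𝓝 x] fun y => (φ y : ℂ) * (y.1 + y.2 * I)) :
    (I * pd2 V x * (starRingEnd ℂ) (pd1 V x)).re = -(φ x * (φ x + φ' x)) := by
  simp only [← equivRealProdCLM_symm_apply] at hV
  have hVd := ((ofRealCLM.hasFDerivAt.comp x hφ).mul
    equivRealProdCLM.symm.hasFDerivAt).congr_of_eventuallyEq hV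
  have hφx : φ' x = x.1 * φ' (1, 0) + x.2 * φ' (0, 1) := by
    have hx : x.1 • ((1, 0) : R2) + x.2 • (0, 1) = x := by ext <;> simp
    nth_rw 1 [← hx]
    rw [map_add, map_smul, map_smul, smul_eq_mul, smul_eq_mul]
  have h1 : pd1 V x = φ x + (x.1 + x.2 * I) * φ' (1, 0) := by
    simp [pd1, hVd.fderiv, equivRealProdCLM_symm_apply]
  have h2 : pd2 V x = φ x * I + (x.1 + x.2 * I) * φ' (0, 1) := by
    simp [pd2, hVd.fderiv, equivRealProdCLM_symm_apply]
  rw [h1, h2, hφx]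
  simp only [map_add, map_mul, conj_ofReal, conj_I, mul_re, mul_im, add_re, add_im, ofReal_re,
    ofReal_im, I_re, I_im, neg_re, neg_im]
  ring

lemma re_I_mul_pd2_mul_conj_pd1_of_radial {ρ : ℝ → ℝ} {V : R2 → ℂ} {x : R2} (hx : x ≠ 0)
    (hρ : DifferentiableAt ℝ ρ (rE x))
    (hV : V =ᶠ[𝓝 x] fun y => (ρ (rE y) : ℂ) * (y.1 + y.2 * I) / rE y) :
    (I * pd2 V x * (starRingEnd ℂ) (pd1 V x)).re = -(ρ (rE x) * deriv ρ (rE x)) / rE x := by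
  have hr : rE x ≠ 0 := (rE_pos_s18 hx).ne'
  have hg : HasDerivAt (fun t => ρ t / t) ((deriv ρ (rE x) * rE x - ρ (rE x) * 1) / rE x ^ 2)
      (rE x) := hρ.hasDerivAt.div (hasDerivAt_id _) hr
  have hV' : V =ᶠ[𝓝 x] fun y => (((fun t => ρ t / t) ∘ rE) y : ℂ) * (y.1 + y.2 * I) :=
    hV.mono fun y hy => by simp only [hy, Function.comp_apply]; push_cast; ring
  rw [re_I_mul_pd2_mul_conj_pd1 (hg.comp_hasFDerivAt x (hasFDerivAt_rE hx)) hV']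
  simp only [Function.comp_apply, FunLike.coe_smul, FunLike.coe_add,
    Pi.smul_apply, Pi.add_apply, ContinuousLinearMap.coe_fst', ContinuousLinearMap.coe_snd',
    smul_eq_mul, ← sq, ← rE_sq_s18]
  field_simp
  ring

lemma continuous_rE : Continuous rE := by unfold rE; fun_prop

lemma rE_polarCoord_symm {p : ℝ × ℝ} (hp : 0 ≤ p.1) : rE (polarCoord.symm p) = p.1 := by
  simp only [rE, polarCoord_symm_apply, mul_pow]
  rw [← mul_add, Real.cos_sq_add_sin_sq, mul_one, Real.sqrt_sq hp]

lemma setIntegral_rE_le_of_radial {F : R2 → ℝ} {f : ℝ → ℝ} (hF : ∀ x ≠ 0, F x = f (rE x))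
    {R : ℝ} (hR : 0 ≤ R) :
    ∫ x in {y : R2 | rE y ≤ R}, F x = 2 * Real.pi * ∫ t in (0)..R, t * f t := by
  set S := {y : R2 | rE y ≤ R}
  have hS : MeasurableSet S := (isClosed_le continuous_rE continuous_const).measurableSet
  calc ∫ x in S, F x
      = ∫ p in polarCoord.target, p.1 • S.indicator F (polarCoord.symm p) := by
        rw [integral_comp_polarCoord_symm, integral_indicator hS]
    _ = ∫ p in Ioi (0 : ℝ) ×ˢ Ioo (-Real.pi) Real.pi,
          (Iic R).indicator (fun t => t * f t) p.1 * (fun _ => (1 : ℝ)) p.2 := by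
        refine setIntegral_congr_fun (measurableSet_Ioi.prod measurableSet_Ioo) ?_
        rintro ⟨t, θ⟩ ⟨ht : 0 < t, -⟩
        have hr : rE (polarCoord.symm (t, θ)) = t := rE_polarCoord_symm ht.le
        have hne : polarCoord.symm (t, θ) ≠ 0 := fun h => ht.ne' (by rw [← hr, h]; simp [rE])
        simp only [indicator_apply, S, mem_ofPred_eq, hF _ hne, hr, mem_Iic, smul_eq_mul, mul_one]
        split_ifs <;> simp
    _ = (∫ t in Ioi (0 : ℝ), (Iic R).indicator (fun t => t * f t) t) *
          ∫ _ in Ioo (-Real.pi) Real.pi, (1 : ℝ) := by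
        rw [Measure.volume_eq_prod]
        exact setIntegral_prod_mul ((Iic R).indicator fun t => t * f t) (fun _ => (1 : ℝ)) _ _
    _ = 2 * Real.pi * ∫ t in (0)..R, t * f t := by
        rw [setIntegral_indicator measurableSet_Iic, Ioi_inter_Iic,
          ← intervalIntegral.integral_of_le hR, setIntegral_const]
        simp only [Real.volume_real_Ioo, sub_neg_eq_add, smul_eq_mul, mul_one]
        rw [max_eq_left (by positivity)]
        ring

lemma integral_mul_deriv_of_contDiffOn_Ici {ρ : ℝ → ℝ} {a b : ℝ} (hρ : ContDiffOn ℝ 1 ρ (Ici a))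
    (hab : a ≤ b) : ∫ t in a..b, ρ t * deriv ρ t = (ρ b ^ 2 - ρ a ^ 2) / 2 := by
  have hderiv : ∀ t ∈ Ioi a, derivWithin ρ (Ici a) t = deriv ρ t := fun t ht =>
    derivWithin_of_mem_nhds (Ici_mem_nhds ht)
  have hsq : ∀ t ∈ Ioo a b,
      HasDerivAt (fun s => ρ s ^ 2 / 2) (ρ t * derivWithin ρ (Ici a) t) t := fun t ht => by
    have hρt := ((hρ.contDiffAt (Ici_mem_nhds ht.1)).differentiableAt one_ne_zero).hasDerivAt
    refine ((hρt.pow 2).div_const 2).congr_deriv ?_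
    rw [hderiv t ht.1]
    ring
  have hcont : ContinuousOn (fun t => ρ t * derivWithin ρ (Ici a) t) (uIcc a b) := by
    rw [uIcc_of_le hab]
    exact (hρ.continuousOn.mul (hρ.continuousOn_derivWithin (uniqueDiffOn_Ici a) le_rfl)).mono
      Icc_subset_Ici_self
  calc ∫ t in a..b, ρ t * deriv ρ t = ∫ t in a..b, ρ t * derivWithin ρ (Ici a) t :=
        intervalIntegral.integral_congr_ae (Eventually.of_forall fun t ht => by
          rw [uIoc_of_le hab] at ht
          rw [hderiv t ht.1])
    _ = ρ b ^ 2 / 2 - ρ a ^ 2 / 2 :=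
        intervalIntegral.integral_eq_sub_of_hasDerivAt_of_le hab
          (((hρ.continuousOn.mono Icc_subset_Ici_self).pow 2).div_const 2) hsq
          hcont.intervalIntegrable
    _ = (ρ b ^ 2 - ρ a ^ 2) / 2 := by ring

theorem statement18_general (ρ : ℝ → ℝ) (hρ : ContDiffOn ℝ 1 ρ (Set.Ici 0)) (hρ0 : ρ 0 = 0)
    (V : R2 → ℂ)
    (hVdef : ∀ x : R2, x ≠ 0 →
      V x = (ρ (rE x) : ℂ) * ((x.1 : ℂ) + (x.2 : ℂ) * Complex.I) / (rE x : ℂ)) :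
    (∀ x : R2, x ≠ 0 →
      (Complex.I * pd2 V x * (starRingEnd ℂ) (pd1 V x)).re
        = -(ρ (rE x) * deriv ρ (rE x)) / rE x) ∧
    ∀ R : ℝ, 0 < R →
      (∫ x in {y : R2 | rE y ≤ R}, (Complex.I * pd2 V x * (starRingEnd ℂ) (pd1 V x)).re)
        = -Real.pi * ρ R ^ 2 := by
  have hpointwise : ∀ x : R2, x ≠ 0 →
      (Complex.I * pd2 V x * (starRingEnd ℂ) (pd1 V x)).re
        = -(ρ (rE x) * deriv ρ (rE x)) / rE x := fun x hx =>
    re_I_mul_pd2_mul_conj_pd1_of_radial hx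
      ((hρ.contDiffAt (Ici_mem_nhds (rE_pos_s18 hx))).differentiableAt one_ne_zero)
      ((eventually_ne_nhds hx).mono hVdef)
  refine ⟨hpointwise, fun R hR => ?_⟩
  rw [setIntegral_rE_le_of_radial (f := fun t => -(ρ t * deriv ρ t) / t) hpointwise hR.le]
  have hcancel : ∫ t in (0)..R, t * (-(ρ t * deriv ρ t) / t)
      = -∫ t in (0)..R, ρ t * deriv ρ t := by
    rw [← intervalIntegral.integral_neg]
    refine intervalIntegral.integral_congr_ae (Eventually.of_forall fun t ht => ?_)
    rw [uIoc_of_le hR.le] at ht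
    exact mul_div_cancel₀ _ ht.1.ne'
  rw [hcancel, integral_mul_deriv_of_contDiffOn_Ici hρ hR.le, hρ0]
  ring

/-- For a vortex-shaped `C¹` map `V(x) = ρ(|x|)(x₁+ix₂)/|x|` one has
`Re(i ∂₂V conj(∂₁V)) = −ρρ′/r` away from the origin, and the integral over the Euclidean
ball of radius `R` equals `−π ρ(R)²`. -/
theorem statement18 (ρ : ℝ → ℝ) (hρ : ContDiffOn ℝ 1 ρ (Set.Ici 0)) (hρ0 : ρ 0 = 0)
    (V : R2 → ℂ)
    (hVdef : ∀ x : R2, x ≠ 0 →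
      V x = (ρ (rE x) : ℂ) * ((x.1 : ℂ) + (x.2 : ℂ) * Complex.I) / (rE x : ℂ))
    (hV : ContDiff ℝ 1 V) :
    (∀ x : R2, x ≠ 0 →
      (Complex.I * pd2 V x * (starRingEnd ℂ) (pd1 V x)).re
        = -(ρ (rE x) * deriv ρ (rE x)) / rE x) ∧
    ∀ R : ℝ, 0 < R →
      (∫ x in {y : R2 | rE y ≤ R}, (Complex.I * pd2 V x * (starRingEnd ℂ) (pd1 V x)).re)
        = -Real.pi * ρ R ^ 2 :=
  statement18_general ρ hρ hρ0 V hVdef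
end
end
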